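/- arXiv:2403.04907 — 2 statements merged into one kernel-verified Lean document; each statement's English description precedes it below -/
import Mathlib

section
/- Let γ : Ω → (0,∞) and c : Ω → [0,∞) be random variables with c ∈ L^{p}(Ω,𝓕,ℙ) for some p > 0, and assume the decay condition: there exist a₀ > 0 and E_ω ≥ 1 with E ∈ L^{q₀}(Ω,𝓕,ℙ) such that for ℙ-a.e. ω and all n ≥ 1: max( Π_{j=0}^{n−1} γ_{σ^{j}ω}^{−1}, Π_{j=1}^{n−1} γ_{σ^{−j}ω}^{−1} ) ≤ E_ω·n^{−a₀}. If a₀ > 1/p + 1, then there exist a constant C > 0 and a random variable R ∈ L^{p}(Ω,𝓕,ℙ) such that for ℙ-a.e. ω ∈ Ω the following holds: for every n ≥ 1 and all C² real functions z₁,…,z_n defined on intervals, with nonvanishing first derivatives and such that the composition y = z_n ∘ z_{n−1} ∘ ⋯ ∘ z₁ is defined on a nondegenerate interval, if |z_j′| ≤ γ_{σ^{−j}ω}^{−1} and |z_j″| ≤ c(σ^{−j}ω)·|z_j′| pointwise for each 1 ≤ j ≤ n, then sup |y″/y′| ≤ Σ_{k=1}^{n} c(σ^{−k}ω)·Π_{j=1}^{k−1}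 γ_{σ^{−j}ω}^{−1} ≤ C·R(ω)·E_ω. -/
open MeasureTheory Function

noncomputable section

/-- `C ∈ L^p(Ω,𝓕,ℙ)` for a nonnegative random variable `C`. -/
def MemLpRV {Ω : Type*} [MeasurableSpace Ω] (ℙ : Measure Ω) (p : ℝ) (C : Ω → ℝ) : Prop :=
  Measurable C ∧ (∀ ω, 0 ≤ C ω) ∧ Integrable (fun ω => C ω ^ p) ℙ

/-- The `C^r` norm of a (1-periodic) function on `ℝ`:
`max_{0 ≤ i ≤ r} sup_x |f^{(i)}(x)|`. -/
def crNorm (r : ℕ) (f : ℝ → ℝ) : ℝ :=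
  ⨆ p : Fin (r + 1) × ℝ, |iteratedDeriv (p.1 : ℕ) f p.2|

/-- The transfer operator (with respect to Lebesgue/Haar measure) of the circle map
induced by the lift `T : ℝ → ℝ`, acting on (1-periodic) functions:
`L g (x) = Σ_{y : T y = x} g(y)/|T'(y)|`, the sum running over the preimages of `x`
in a fundamental domain `[0,1)`. -/
def transferOp (T : ℝ → ℝ) (g : ℝ → ℝ) (x : ℝ) : ℝ :=
  ∑' y : {y : ℝ // y ∈ Set.Ico (0 : ℝ) 1 ∧ ∃ k : ℤ, T y = x + k}, g (y : ℝ) / |deriv T (y : ℝ)|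

/-- Iterates of maps along an orbit of `σ`: `T^n_ω = T_{σ^{n-1}ω} ∘ ⋯ ∘ T_ω`. -/
def mapIter {Ω : Type*} (σ : Ω → Ω) (T : Ω → ℝ → ℝ) : ℕ → Ω → ℝ → ℝ
  | 0, _, x => x
  | n + 1, ω, x => mapIter σ T n (σ ω) (T ω x)

/-- Iterates of the transfer operators along an orbit of `σ`:
`L^n_ω = L_{σ^{n-1}ω} ∘ ⋯ ∘ L_ω`. -/
def transferIter {Ω : Type*} (σ : Ω → Ω) (T : Ω → ℝ → ℝ) : ℕ → Ω → (ℝ → ℝ) → ℝ → ℝ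
  | 0, _, g => g
  | n + 1, ω, g => transferIter σ T n (σ ω) (transferOp (T ω) g)

/-- The composition `z_n ∘ z_{n-1} ∘ ⋯ ∘ z_1` (the empty composition is the identity). -/
def compSeq (z : ℕ → ℝ → ℝ) : ℕ → ℝ → ℝ
  | 0, x => x
  | n + 1, x => z (n + 1) (compSeq z n x)

/-- Birkhoff sums `S_n φ (x) = Σ_{j<n} φ_{σ^j ω}(T^j_ω x)` along an orbit of `σ`. -/
def birkSum {Ω : Type*} (σ : Ω → Ω) (T : Ω → ℝ → ℝ) (φ : Ω → ℝ → ℝ) (n : ℕ) (ω : Ω)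
    (x : ℝ) : ℝ :=
  ∑ j ∈ Finset.range n, φ (σ^[j] ω) (mapIter σ T j ω x)

/-- Integral over the circle (one period). -/
def circInt (g : ℝ → ℝ) : ℝ := ∫ x in Set.Ioc (0 : ℝ) 1, g x

/-
The chain rule gives `(f ∘ g)'' / (f ∘ g)' = (f'' / f') ∘ g · g' + g'' / g'`, so along the
composition `z_n ∘ ⋯ ∘ z_1` the distortions add up, the `k`-th one weighted by
`|(z_{k-1} ∘ ⋯ ∘ z_1)'| ≤ ∏_{j<k} γ_{σ^{-j}ω}⁻¹`. For the random bound split `a₀ = r + s` with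
`s > 1` and `r p > 1`. The decay condition bounds the `k`-th term by
`E_ω · (c(σ^{-k}ω) k^{-r}) · k^{-s}`, and `c(σ^{-k}ω) k^{-r}` is dominated by the weighted
`ℓ^p`-norm `R(ω)` of the orbit sequence; since `σ⁻¹` preserves `ℙ`,
`E[R^p] = E[c^p] · Σ_k k^{-rp} < ∞`.
-/

open scoped ENNReal

section Distortion

theorem deriv_deriv_comp {f g : ℝ → ℝ} (hf : ContDiff ℝ 2 f) (hg : ContDiff ℝ 2 g)
    (x : ℝ) : deriv (deriv (f ∘ g)) x =
      deriv (deriv f) (g x) * deriv g x ^ 2 + deriv f (g x) * deriv (deriv g) x := by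
  have hf' : Differentiable ℝ (deriv f) := hf.differentiable_deriv_two
  have hg' : Differentiable ℝ (deriv g) := hg.differentiable_deriv_two
  have hg1 : Differentiable ℝ g := hg.differentiable two_ne_zero
  have hfg : deriv (f ∘ g) = fun y => (deriv f ∘ g) y * deriv g y :=
    funext fun y => deriv_comp y ((hf.differentiable two_ne_zero) _) (hg1 _)
  rw [hfg, deriv_fun_mul ((hf' _).comp x (hg1 _)) (hg' _), deriv_comp x (hf' _) (hg1 _)]
  simp only [comp_apply]
  ring

theorem abs_deriv_deriv_comp_le {f g : ℝ → ℝ} {x B c P : ℝ}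
    (hf : ContDiff ℝ 2 f) (hg : ContDiff ℝ 2 g) (hc : 0 ≤ c)
    (hf'' : |deriv (deriv f) (g x)| ≤ c * |deriv f (g x)|)
    (hg'' : |deriv (deriv g) x| ≤ B * |deriv g x|) (hg' : |deriv g x| ≤ P) :
    |deriv (deriv (f ∘ g)) x| ≤ (B + c * P) * |deriv (f ∘ g) x| := by
  rw [deriv_deriv_comp hf hg, deriv_comp x ((hf.differentiable two_ne_zero) _)
    ((hg.differentiable two_ne_zero) _)]
  calc _ ≤ |deriv (deriv f) (g x) * deriv g x ^ 2| + |deriv f (g x) * deriv (deriv g) x| :=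
        abs_add_le _ _
    _ = |deriv (deriv f) (g x)| * |deriv g x| ^ 2 + |deriv f (g x)| * |deriv (deriv g) x| := by
        rw [abs_mul, abs_mul, abs_pow]
    _ ≤ c * |deriv f (g x)| * (|deriv g x| * P) + |deriv f (g x)| * (B * |deriv g x|) := by
        rw [sq]
        gcongr
    _ = (B + c * P) * |deriv f (g x) * deriv g x| := by
        rw [abs_mul]
        ring

variable {z : ℕ → ℝ → ℝ} {n : ℕ}

theorem contDiff_compSeq {k : WithTop ℕ∞}
    (hz : ∀ j, 1 ≤ j → j ≤ n → ContDiff ℝ k (z j)) : ContDiff ℝ k (compSeq z n) := by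
  induction n with
  | zero => exact contDiff_id
  | succ n ih =>
    exact (hz (n + 1) le_add_self le_rfl).comp (ih fun j hj hjn => hz j hj (hjn.trans n.le_succ))

theorem deriv_compSeq (hz : ∀ j, 1 ≤ j → j ≤ n → ContDiff ℝ 1 (z j)) (x : ℝ) :
    deriv (compSeq z n) x = ∏ j ∈ Finset.Icc 1 n, deriv (z j) (compSeq z (j - 1) x) := by
  induction n with
  | zero => exact deriv_id x
  | succ n ih =>
    have hz' : ∀ j, 1 ≤ j → j ≤ n → ContDiff ℝ 1 (z j) :=
      fun j hj hjn => hz j hj (hjn.trans n.le_succ)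
    rw [Finset.prod_Icc_succ_top (Nat.le_add_left 1 n), ← ih hz', Nat.add_sub_cancel, mul_comm]
    exact deriv_comp x ((hz (n + 1) le_add_self le_rfl).differentiable one_ne_zero _)
      ((contDiff_compSeq hz').differentiable one_ne_zero _)

theorem abs_deriv_compSeq_le {g : ℕ → ℝ}
    (hz : ∀ j, 1 ≤ j → j ≤ n → ContDiff ℝ 1 (z j)) (x : ℝ)
    (hz' : ∀ j, 1 ≤ j → j ≤ n → |deriv (z j) (compSeq z (j - 1) x)| ≤ g j) :
    |deriv (compSeq z n) x| ≤ ∏ j ∈ Finset.Icc 1 n, g j := by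
  rw [deriv_compSeq hz, Finset.abs_prod]
  refine Finset.prod_le_prod (fun _ _ => abs_nonneg _) fun j hj => ?_
  obtain ⟨hj1, hjn⟩ := Finset.mem_Icc.mp hj
  exact hz' j hj1 hjn

theorem abs_deriv_deriv_compSeq_le {g c : ℕ → ℝ} (hc : ∀ j, 0 ≤ c j)
    (hz : ∀ j, 1 ≤ j → j ≤ n → ContDiff ℝ 2 (z j)) (x : ℝ)
    (hz' : ∀ j, 1 ≤ j → j ≤ n → |deriv (z j) (compSeq z (j - 1) x)| ≤ g j)
    (hz'' : ∀ j, 1 ≤ j → j ≤ n → |deriv (deriv (z j)) (compSeq z (j - 1) x)| ≤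
      c j * |deriv (z j) (compSeq z (j - 1) x)|) :
    |deriv (deriv (compSeq z n)) x| ≤
      (∑ k ∈ Finset.Icc 1 n, c k * ∏ j ∈ Finset.Ico 1 k, g j) *
        |deriv (compSeq z n) x| := by
  induction n with
  | zero => simp [compSeq]
  | succ n ih =>
    have hzn : ∀ j, 1 ≤ j → j ≤ n → ContDiff ℝ 2 (z j) :=
      fun j hj hjn => hz j hj (hjn.trans n.le_succ)
    rw [Finset.sum_Icc_succ_top (Nat.le_add_left 1 n), Finset.Ico_add_one_right_eq_Icc]
    have hlast := hz'' (n + 1) le_add_self le_rfl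
    rw [Nat.add_sub_cancel] at hlast
    exact abs_deriv_deriv_comp_le (hz (n + 1) le_add_self le_rfl) (contDiff_compSeq hzn) (hc _)
      hlast
      (ih hzn (fun j hj hjn => hz' j hj (hjn.trans n.le_succ))
        fun j hj hjn => hz'' j hj (hjn.trans n.le_succ))
      (abs_deriv_compSeq_le (fun j hj hjn => (hzn j hj hjn).of_le one_le_two) x
        fun j hj hjn => hz' j hj (hjn.trans n.le_succ))

end Distortion

theorem MeasureTheory.MeasurePreserving.lintegral_tsum_comp_iterate_mul {Ω : Type*}
    [MeasurableSpace Ω] {μ : Measure Ω} {τ : Ω → Ω} (hτ : MeasurePreserving τ μ μ)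
    {f : Ω → ℝ≥0∞} (hf : Measurable f) (w : ℕ → ℝ≥0∞) :
    ∫⁻ ω, ∑' k, f (τ^[k] ω) * w k ∂μ = (∫⁻ ω, f ω ∂μ) * ∑' k, w k := by
  have hfk (k : ℕ) : Measurable fun ω => f (τ^[k] ω) := hf.comp (hτ.measurable.iterate k)
  rw [lintegral_tsum fun k => ((hfk k).mul_const (w k)).aemeasurable, ← ENNReal.tsum_mul_left]
  congr 1 with k
  rw [lintegral_mul_const _ (hfk k), (hτ.iterate k).lintegral_comp hf]

section OrbitNorm

variable {Ω : Type*}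

def weightedOrbitNorm (τ : Ω → Ω) (c : Ω → ℝ) (p r : ℝ) (ω : Ω) : ℝ≥0∞ :=
  (∑' k : ℕ, ENNReal.ofReal (c (τ^[k] ω) * (k : ℝ) ^ (-r)) ^ p) ^ p⁻¹

variable {τ : Ω → Ω} {c : Ω → ℝ} {p r : ℝ}

theorem ofReal_le_weightedOrbitNorm (hp : 0 < p) (ω : Ω) (k : ℕ) :
    ENNReal.ofReal (c (τ^[k] ω) * (k : ℝ) ^ (-r)) ≤ weightedOrbitNorm τ c p r ω := by
  rw [weightedOrbitNorm, ← ENNReal.rpow_le_rpow_iff hp, ENNReal.rpow_inv_rpow hp.ne']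
  exact ENNReal.le_tsum
    (f := fun k : ℕ => ENNReal.ofReal (c (τ^[k] ω) * (k : ℝ) ^ (-r)) ^ p) k

variable [MeasurableSpace Ω]

theorem measurable_weightedOrbitNorm (hτ : Measurable τ) (hc : Measurable c) :
    Measurable (weightedOrbitNorm τ c p r) := by
  unfold weightedOrbitNorm
  refine (Measurable.tsum fun k => ?_).pow_const _
  exact ((hc.comp (hτ.iterate k)).mul_const _).ennreal_ofReal.pow_const _

theorem lintegral_weightedOrbitNorm_rpow_lt_top {ℙ : Measure Ω}
    (hτ : MeasurePreserving τ ℙ ℙ) (hp : 0 < p) (hc : MemLpRV ℙ p c) (hr : 1 < r * p) :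
    ∫⁻ ω, weightedOrbitNorm τ c p r ω ^ p ∂ℙ < ∞ := by
  have hsplit : ∀ ω, weightedOrbitNorm τ c p r ω ^ p =
      ∑' k : ℕ, ENNReal.ofReal (c (τ^[k] ω) ^ p) *
        ENNReal.ofReal ((k : ℝ) ^ (-(r * p))) := by
    intro ω
    rw [weightedOrbitNorm, ENNReal.rpow_inv_rpow hp.ne']
    congr 1 with k
    rw [ENNReal.ofReal_mul (hc.2.1 _), ENNReal.mul_rpow_of_nonneg _ _ hp.le,
      ENNReal.ofReal_rpow_of_nonneg (hc.2.1 _) hp.le,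
      ENNReal.ofReal_rpow_of_nonneg (Real.rpow_nonneg k.cast_nonneg _) hp.le,
      ← Real.rpow_mul k.cast_nonneg, neg_mul]
  simp_rw [hsplit]
  rw [hτ.lintegral_tsum_comp_iterate_mul (hc.1.pow_const p).ennreal_ofReal,
    ← ENNReal.ofReal_tsum_of_nonneg (fun k => Real.rpow_nonneg k.cast_nonneg _)
      (Real.summable_nat_rpow.2 (by linarith))]
  exact ENNReal.mul_lt_top hc.2.2.lintegral_lt_top ENNReal.ofReal_lt_top

theorem memLpRV_toReal_weightedOrbitNorm {ℙ : Measure Ω} (hτ : MeasurePreserving τ ℙ ℙ)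
    (hp : 0 < p) (hc : MemLpRV ℙ p c) (hr : 1 < r * p) :
    MemLpRV ℙ p fun ω => (weightedOrbitNorm τ c p r ω).toReal := by
  have hmeas := measurable_weightedOrbitNorm (p := p) (r := r) hτ.measurable hc.1
  refine ⟨hmeas.ennreal_toReal, fun _ => ENNReal.toReal_nonneg, ?_⟩
  simp_rw [ENNReal.toReal_rpow]
  exact integrable_toReal_of_lintegral_ne_top (hmeas.pow_const p).aemeasurable
    (lintegral_weightedOrbitNorm_rpow_lt_top hτ hp hc hr).ne

theorem ae_weightedOrbitNorm_lt_top {ℙ : Measure Ω} (hτ : MeasurePreserving τ ℙ ℙ)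
    (hp : 0 < p) (hc : MemLpRV ℙ p c) (hr : 1 < r * p) :
    ∀ᵐ ω ∂ℙ, weightedOrbitNorm τ c p r ω < ∞ := by
  filter_upwards [ae_lt_top ((measurable_weightedOrbitNorm hτ.measurable hc.1).pow_const p)
    (lintegral_weightedOrbitNorm_rpow_lt_top hτ hp hc hr).ne] with ω hω
  exact (ENNReal.rpow_lt_top_iff_of_pos hp).1 hω

end OrbitNorm

theorem sum_Icc_mul_le_tsum_rpow {n : ℕ} {c P : ℕ → ℝ} {E R r s : ℝ}
    (hc : ∀ k, 0 ≤ c k) (hE : 0 ≤ E) (hs : 1 < s)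
    (hP : ∀ k, 1 ≤ k → P k ≤ E * (k : ℝ) ^ (-(r + s)))
    (hR : ∀ k, 1 ≤ k → c k * (k : ℝ) ^ (-r) ≤ R) :
    ∑ k ∈ Finset.Icc 1 n, c k * P k ≤ (∑' k : ℕ, (k : ℝ) ^ (-s)) * R * E := by
  have hR0 : 0 ≤ R := (hc 1).trans (by simpa using hR 1 le_rfl)
  have hterm : ∀ k ∈ Finset.Icc 1 n, c k * P k ≤ E * R * (k : ℝ) ^ (-s) := by
    intro k hk
    have hk1 : 1 ≤ k := (Finset.mem_Icc.mp hk).1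
    have hkpos : (0 : ℝ) < k := Nat.cast_pos.2 hk1
    calc c k * P k ≤ c k * (E * (k : ℝ) ^ (-(r + s))) :=
          mul_le_mul_of_nonneg_left (hP k hk1) (hc k)
      _ = E * (c k * (k : ℝ) ^ (-r)) * (k : ℝ) ^ (-s) := by
        rw [neg_add, Real.rpow_add hkpos]
        ring
      _ ≤ E * R * (k : ℝ) ^ (-s) := by
        gcongr
        exact hR k hk1
  calc ∑ k ∈ Finset.Icc 1 n, c k * P k ≤ ∑ k ∈ Finset.Icc 1 n, E * R * (k : ℝ) ^ (-s) :=
        Finset.sum_le_sum hterm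
    _ = E * R * ∑ k ∈ Finset.Icc 1 n, (k : ℝ) ^ (-s) := (Finset.mul_sum ..).symm
    _ ≤ E * R * ∑' k : ℕ, (k : ℝ) ^ (-s) := by
        gcongr
        exact (Real.summable_nat_rpow.2 (by linarith)).sum_le_tsum _
          fun k _ => Real.rpow_nonneg k.cast_nonneg _
    _ = (∑' k : ℕ, (k : ℝ) ^ (-s)) * R * E := by ring

theorem stmt_7_general
    {Ω : Type*} [MeasurableSpace Ω] (ℙ : Measure Ω)
    (σ σinv : Ω → Ω)
    (hσ : MeasurePreserving σ ℙ ℙ) (hσinv : Measurable σinv)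
    (hinv₁ : Function.LeftInverse σinv σ) (hinv₂ : Function.RightInverse σinv σ)
    (γ : Ω → ℝ)
    (c : Ω → ℝ) (p : ℝ) (hp : 0 < p) (hc : MemLpRV ℙ p c)
    -- the decay condition
    (a₀ : ℝ)
    (E : Ω → ℝ) (hE1 : ∀ ω, 1 ≤ E ω)
    (hdecay : ∀ᵐ ω ∂ℙ, ∀ n : ℕ, 1 ≤ n →
      max (∏ j ∈ Finset.range n, (γ (σ^[j] ω))⁻¹)
          (∏ j ∈ Finset.Ico 1 n, (γ (σinv^[j] ω))⁻¹) ≤ E ω * (n : ℝ) ^ (-a₀))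
    (ha₀ : 1 / p + 1 < a₀) :
    ∃ C : ℝ, 0 < C ∧
      ∃ R : Ω → ℝ, MemLpRV ℙ p R ∧
        ∀ᵐ ω ∂ℙ, ∀ n : ℕ, 1 ≤ n → ∀ z : ℕ → ℝ → ℝ, ∀ s : Set ℝ,
          (∀ j, 1 ≤ j → j ≤ n → ContDiff ℝ 2 (z j)) →
          (∀ j, 1 ≤ j → j ≤ n → ∀ x ∈ s,
            deriv (z j) (compSeq z (j - 1) x) ≠ 0 ∧
            |deriv (z j) (compSeq z (j - 1) x)| ≤ (γ (σinv^[j] ω))⁻¹ ∧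
            |deriv (deriv (z j)) (compSeq z (j - 1) x)| ≤
              c (σinv^[j] ω) * |deriv (z j) (compSeq z (j - 1) x)|) →
          (∀ x ∈ s,
              |deriv (deriv (compSeq z n)) x / deriv (compSeq z n) x| ≤
                ∑ k ∈ Finset.Icc 1 n,
                  c (σinv^[k] ω) * ∏ j ∈ Finset.Ico 1 k, (γ (σinv^[j] ω))⁻¹) ∧
            (∑ k ∈ Finset.Icc 1 n,
                c (σinv^[k] ω) * ∏ j ∈ Finset.Ico 1 k, (γ (σinv^[j] ω))⁻¹) ≤
              C * R ω * E ω := by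
  have hσinv_mp : MeasurePreserving σinv ℙ ℙ :=
    MeasurePreserving.symm ⟨⟨σ, σinv, hinv₁, hinv₂⟩, hσ.measurable, hσinv⟩ hσ
  set s := (a₀ - 1 / p + 1) / 2 with hs_def
  set r := a₀ - s with hr_def
  have hs : 1 < s := by rw [hs_def]; linarith
  have hr : 1 < r * p := by
    rw [← div_lt_iff₀ hp, hr_def, hs_def]
    linarith
  refine ⟨∑' k : ℕ, (k : ℝ) ^ (-s), (Real.summable_nat_rpow.2 (by linarith)).tsum_pos
      (fun k => Real.rpow_nonneg k.cast_nonneg _) 1 (by simp),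
    fun ω => (weightedOrbitNorm σinv c p r ω).toReal,
    memLpRV_toReal_weightedOrbitNorm hσinv_mp hp hc hr, ?_⟩
  filter_upwards [hdecay, ae_weightedOrbitNorm_lt_top hσinv_mp hp hc hr] with ω hdec hfin
  intro n _ z t hz hzt
  refine ⟨fun x hx => ?_, ?_⟩
  · have hne : deriv (compSeq z n) x ≠ 0 := by
      rw [deriv_compSeq fun j hj hjn => (hz j hj hjn).of_le one_le_two]
      exact Finset.prod_ne_zero_iff.2 fun j hj =>
        (hzt j (Finset.mem_Icc.1 hj).1 (Finset.mem_Icc.1 hj).2 x hx).1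
    rw [abs_div, div_le_iff₀ (abs_pos.2 hne)]
    exact abs_deriv_deriv_compSeq_le (fun j => hc.2.1 _) hz x
      (fun j hj hjn => (hzt j hj hjn x hx).2.1) fun j hj hjn => (hzt j hj hjn x hx).2.2
  · exact sum_Icc_mul_le_tsum_rpow (fun k => hc.2.1 _) (zero_le_one.trans (hE1 ω)) hs
      (fun k hk => (le_max_right _ _).trans ((hdec k hk).trans_eq (by rw [sub_add_cancel])))
      fun k _ => (ENNReal.ofReal_le_iff_le_toReal hfin.ne).1 (ofReal_le_weightedOrbitNorm hp ω k)

theorem stmt_7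
    {Ω : Type*} [MeasurableSpace Ω] (ℙ : Measure Ω) [IsProbabilityMeasure ℙ]
    (σ σinv : Ω → Ω)
    (hσ : MeasurePreserving σ ℙ ℙ) (hσinv : Measurable σinv)
    (hinv₁ : Function.LeftInverse σinv σ) (hinv₂ : Function.RightInverse σinv σ)
    (γ : Ω → ℝ) (hγ : ∀ ω, 0 < γ ω)
    (c : Ω → ℝ) (p : ℝ) (hp : 0 < p) (hc : MemLpRV ℙ p c)
    -- the decay condition
    (a₀ q₀ : ℝ) (ha₀pos : 0 < a₀) (hq₀ : 0 < q₀)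
    (E : Ω → ℝ) (hE1 : ∀ ω, 1 ≤ E ω) (hE : MemLpRV ℙ q₀ E)
    (hdecay : ∀ᵐ ω ∂ℙ, ∀ n : ℕ, 1 ≤ n →
      max (∏ j ∈ Finset.range n, (γ (σ^[j] ω))⁻¹)
          (∏ j ∈ Finset.Ico 1 n, (γ (σinv^[j] ω))⁻¹) ≤ E ω * (n : ℝ) ^ (-a₀))
    (ha₀ : 1 / p + 1 < a₀) :
    ∃ C : ℝ, 0 < C ∧
      ∃ R : Ω → ℝ, MemLpRV ℙ p R ∧
        ∀ᵐ ω ∂ℙ, ∀ n : ℕ, 1 ≤ n → ∀ z : ℕ → ℝ → ℝ, ∀ s : Set ℝ,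
          (∀ j, 1 ≤ j → j ≤ n → ContDiff ℝ 2 (z j)) →
          (∀ j, 1 ≤ j → j ≤ n → ∀ x ∈ s,
            deriv (z j) (compSeq z (j - 1) x) ≠ 0 ∧
            |deriv (z j) (compSeq z (j - 1) x)| ≤ (γ (σinv^[j] ω))⁻¹ ∧
            |deriv (deriv (z j)) (compSeq z (j - 1) x)| ≤
              c (σinv^[j] ω) * |deriv (z j) (compSeq z (j - 1) x)|) →
          (∀ x ∈ s,
              |deriv (deriv (compSeq z n)) x / deriv (compSeq z n) x| ≤
                ∑ k ∈ Finset.Icc 1 n,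
                  c (σinv^[k] ω) * ∏ j ∈ Finset.Ico 1 k, (γ (σinv^[j] ω))⁻¹) ∧
            (∑ k ∈ Finset.Icc 1 n,
                c (σinv^[k] ω) * ∏ j ∈ Finset.Ico 1 k, (γ (σinv^[j] ω))⁻¹) ≤
              C * R ω * E ω :=
  stmt_7_general ℙ σ σinv hσ hσinv hinv₁ hinv₂ γ c p hp hc a₀ E hE1 hdecay ha₀
end
end

section
/- For each ε ∈ I and ω ∈ Ω let L_{ω,ε} be a bounded linear operator on C⁰(𝕋), and let (h_{ω,ε})_{ω∈Ω} ⊆ C⁰(𝕋) be families of functions. Assume there are β > 1 and C₁ ∈ L^{p₁}(Ω,𝓕,ℙ) with p₁ ≥ 1 such that for ℙ-a.e. ω, every ε ∈ I, every n ≥ 1 and every g ∈ C¹(𝕋): ‖L^{n}_{ω,ε} g − (∫ g dm)·h_{σ^{n}ω,ε}‖_∞ ≤ C₁(ω)·n^{−β}·‖g‖_{C¹}, and assume there is a finite random variable E with ‖L_{ω,ε}𝟙‖_∞ ≤ E(ω) for ℙ-a.e. ω and all ε ∈ I. Then there exists a random variable B₀ ∈ L^{p₁}(Ω,𝓕,ℙ)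 such that for ℙ-a.e. ω, all n ≥ 1 and all ε ∈ I: ‖L^{n}_{σ^{−n}ω,ε}𝟙‖_∞ ≤ B₀(ω) + E(σ^{−1}ω), and in particular ‖h_{ω,ε}‖_∞ ≤ B₀(ω) + E(σ^{−1}ω). -/
open MeasureTheory Function

noncomputable section

/-- Iterates of linear operators on functions along an orbit of `σ`:
`L^n_ω = L_{σ^{n-1}ω} ∘ ⋯ ∘ L_ω`. -/
def iterLin {Ω : Type*} (σ : Ω → Ω) (L : Ω → (ℝ → ℝ) →ₗ[ℝ] (ℝ → ℝ)) :
    ℕ → Ω → (ℝ → ℝ) →ₗ[ℝ] (ℝ → ℝ)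
  | 0, _ => LinearMap.id
  | n + 1, ω => (iterLin σ L n (σ ω)).comp (L ω)

open scoped ENNReal

/-! Taking `g = 𝟙` in the mixing bound and pulling it back along `σ⁻ⁿ` gives
`‖L^n_{σ^{-n}ω} 𝟙 - h_ω‖_∞ ≤ C₁(σ^{-n}ω) n^{-β}`; the case `n = 1` together with the bound on
`‖L_{σ^{-1}ω} 𝟙‖_∞` controls `‖h_ω‖_∞`. It remains to dominate `sup_n C₁(σ^{-n}ω) n^{-β}` by an
`L^{p₁}` variable: `(Σ_n C₁(σ^{-n}ω)^{p₁} n^{-βp₁})^{1/p₁}` works, since by invariance of `ℙ` its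
`p₁`-th moment is `E[C₁^{p₁}] Σ_n n^{-βp₁} < ∞`, as `βp₁ > 1`. -/

section SupNorm

lemma crNorm_zero_eq_iSup (f : ℝ → ℝ) : crNorm 0 f = ⨆ x, |f x| :=
  Equiv.iSup_congr (Equiv.uniqueProd ℝ (Fin 1)) fun _ => by simp

lemma crNorm_zero_le {f : ℝ → ℝ} {a : ℝ} (hf : ∀ x, |f x| ≤ a) : crNorm 0 f ≤ a := by
  rw [crNorm_zero_eq_iSup]
  exact ciSup_le hf

lemma abs_le_crNorm_zero {f : ℝ → ℝ} (hc : Continuous f) (hp : Periodic f 1) (x : ℝ) :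
    |f x| ≤ crNorm 0 f := by
  rw [crNorm_zero_eq_iSup]
  exact le_ciSup ((hp.comp abs).compact_of_continuous one_ne_zero hc.abs).bddAbove x

lemma crNorm_zero_le_add_of_sub_le {f g : ℝ → ℝ} {a b : ℝ} (hf : Continuous f)
    (hf' : Periodic f 1) (hg : Continuous g) (hg' : Periodic g 1)
    (hfg : crNorm 0 (fun x => f x - g x) ≤ a) (hgb : crNorm 0 g ≤ b) : crNorm 0 f ≤ a + b :=
  crNorm_zero_le fun x => calc
    |f x| ≤ |f x - g x| + |g x| := by linarith [abs_sub_abs_le_abs_sub (f x) (g x)]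
    _ ≤ a + b := add_le_add ((abs_le_crNorm_zero (hf.sub hg) (hf'.sub hg') x).trans hfg)
        ((abs_le_crNorm_zero hg hg' x).trans hgb)

lemma crNorm_zero_sub_comm (f g : ℝ → ℝ) :
    crNorm 0 (fun x => f x - g x) = crNorm 0 (fun x => g x - f x) := by
  simp only [crNorm_zero_eq_iSup, abs_sub_comm]

lemma crNorm_one_const_one_le : crNorm 1 (fun _ : ℝ => (1 : ℝ)) ≤ 1 := by
  refine ciSup_le fun ⟨i, x⟩ => ?_
  fin_cases i <;> simp

lemma crNorm_zero_sub_le_of_mixing {T : (ℝ → ℝ) → ℝ → ℝ} {h : ℝ → ℝ} {K : ℝ} (hK : 0 ≤ K)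
    (hmix : ∀ g : ℝ → ℝ, ContDiff ℝ 1 g → Periodic g 1 →
      crNorm 0 (fun x => T g x - (∫ t in Set.Ioc (0 : ℝ) 1, g t) * h x) ≤ K * crNorm 1 g) :
    crNorm 0 (fun x => T (fun _ => 1) x - h x) ≤ K := by
  have h1 := hmix (fun _ => 1) contDiff_const fun _ => rfl
  simp only [setIntegral_const, Measure.real, Real.volume_Ioc, sub_zero, ENNReal.ofReal_one,
    ENNReal.toReal_one, smul_eq_mul, one_mul] at h1
  exact h1.trans (mul_le_of_le_one_right hK crNorm_one_const_one_le)

end SupNorm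

lemma iterLin_continuous_periodic {Ω : Type*} (σ : Ω → Ω) (L : Ω → (ℝ → ℝ) →ₗ[ℝ] (ℝ → ℝ))
    (hL : ∀ ω g, Continuous g → Periodic g 1 → Continuous (L ω g) ∧ Periodic (L ω g) 1)
    (n : ℕ) (ω : Ω) {g : ℝ → ℝ} (hc : Continuous g) (hp : Periodic g 1) :
    Continuous (iterLin σ L n ω g) ∧ Periodic (iterLin σ L n ω g) 1 := by
  induction n generalizing ω g with
  | zero => exact ⟨hc, hp⟩
  | succ n ih => exact ih (σ ω) (hL ω g hc hp).1 (hL ω g hc hp).2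

section Ergodic

variable {Ω : Type*} [MeasurableSpace Ω] {μ : Measure Ω} {τ : Ω → Ω}

lemma MemLpRV.const_mul {p c : ℝ} {C : Ω → ℝ} (hC : MemLpRV μ p C) (hc : 0 ≤ c) :
    MemLpRV μ p (fun ω => c * C ω) := by
  refine ⟨hC.1.const_mul c, fun ω => mul_nonneg hc (hC.2.1 ω), ?_⟩
  simp_rw [Real.mul_rpow hc (hC.2.1 _)]
  exact hC.2.2.const_mul _

lemma MeasureTheory.MeasurePreserving.of_leftInverse {σ : Ω → Ω}
    (hσ : MeasurePreserving σ μ μ) (hτ : Measurable τ) (hτσ : LeftInverse τ σ) :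
    MeasurePreserving τ μ μ := by
  refine ⟨hτ, Measure.ext fun s hs => ?_⟩
  rw [Measure.map_apply hτ hs, ← hσ.measure_preimage (hτ hs).nullMeasurableSet,
    ← Set.preimage_comp, hτσ.comp_eq_id, Set.preimage_id]

lemma MeasureTheory.MeasurePreserving.ae_forall_iterate (hτ : MeasurePreserving τ μ μ)
    {P : Ω → Prop} (hP : ∀ᵐ ω ∂μ, P ω) : ∀ᵐ ω ∂μ, ∀ n, P (τ^[n] ω) :=
  ae_all_iff.2 fun n => (hτ.iterate n).quasiMeasurePreserving.ae hP

lemma MeasureTheory.MeasurePreserving.lintegral_tsum_mul_iterate (hτ : MeasurePreserving τ μ μ)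
    (c : ℕ → ℝ≥0∞) {f : Ω → ℝ≥0∞} (hf : Measurable f) :
    ∫⁻ ω, ∑' n, c n * f (τ^[n] ω) ∂μ = (∑' n, c n) * ∫⁻ ω, f ω ∂μ := by
  have hfn (n : ℕ) : Measurable fun ω => f (τ^[n] ω) := hf.comp (hτ.iterate n).measurable
  rw [lintegral_tsum (f := fun n ω => c n * f (τ^[n] ω))
    fun n => ((hfn n).const_mul _).aemeasurable, ← ENNReal.tsum_mul_right]
  congr 1 with n
  rw [lintegral_const_mul _ (hfn n), (hτ.iterate n).lintegral_comp hf]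

theorem MemLpRV.exists_ae_iterate_mul_le (hτ : MeasurePreserving τ μ μ) {p : ℝ} (hp : 0 < p)
    {C : Ω → ℝ} (hC : MemLpRV μ p C) {w : ℕ → ℝ} (hw : ∀ n, 0 ≤ w n)
    (hws : Summable fun n => w n ^ p) :
    ∃ B : Ω → ℝ, MemLpRV μ p B ∧ ∀ᵐ ω ∂μ, ∀ n, C (τ^[n] ω) * w n ≤ B ω := by
  set S : Ω → ℝ≥0∞ := fun ω =>
    ∑' n, ENNReal.ofReal (w n ^ p) * ENNReal.ofReal (C (τ^[n] ω) ^ p)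
  have hCp : Measurable fun ω => ENNReal.ofReal (C ω ^ p) :=
    (hC.1.pow_const p).ennreal_ofReal
  have hSmeas : Measurable S := Measurable.tsum fun n =>
    (hCp.comp (hτ.iterate n).measurable).const_mul _
  have hSint : ∫⁻ ω, S ω ∂μ ≠ ⊤ := by
    rw [hτ.lintegral_tsum_mul_iterate _ hCp,
      ← ENNReal.ofReal_tsum_of_nonneg (fun n => Real.rpow_nonneg (hw n) p) hws]
    exact ENNReal.mul_ne_top ENNReal.ofReal_ne_top hC.2.2.lintegral_lt_top.ne
  refine ⟨fun ω => (S ω).toReal ^ p⁻¹,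
    ⟨hSmeas.ennreal_toReal.pow_const _, fun ω => Real.rpow_nonneg ENNReal.toReal_nonneg _, ?_⟩, ?_⟩
  · simp_rw [Real.rpow_inv_rpow ENNReal.toReal_nonneg hp.ne']
    exact integrable_toReal_of_lintegral_ne_top hSmeas.aemeasurable hSint
  · filter_upwards [ae_lt_top hSmeas hSint] with ω hω n
    have hCn := hC.2.1 (τ^[n] ω)
    rw [Real.le_rpow_inv_iff_of_pos (mul_nonneg hCn (hw n)) ENNReal.toReal_nonneg hp,
      Real.mul_rpow hCn (hw n), mul_comm]
    calc w n ^ p * C (τ^[n] ω) ^ p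
        = (ENNReal.ofReal (w n ^ p) * ENNReal.ofReal (C (τ^[n] ω) ^ p)).toReal := by
          rw [ENNReal.toReal_mul, ENNReal.toReal_ofReal (Real.rpow_nonneg (hw n) p),
            ENNReal.toReal_ofReal (Real.rpow_nonneg hCn p)]
      _ ≤ (S ω).toReal := ENNReal.toReal_mono hω.ne (ENNReal.le_tsum n)

end Ergodic

theorem stmt_12_general
    {Ω : Type*} [MeasurableSpace Ω] (ℙ : Measure Ω)
    (σ σinv : Ω → Ω)
    (hσ : MeasurePreserving σ ℙ ℙ) (hσinv : Measurable σinv)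
    (hinv₁ : Function.LeftInverse σinv σ) (hinv₂ : Function.RightInverse σinv σ)
    (I : Set ℝ)
    -- the operators L_{ω,ε}, bounded (linear) on C⁰(𝕋)
    (L : ℝ → Ω → (ℝ → ℝ) →ₗ[ℝ] (ℝ → ℝ))
    (hLpres : ∀ ε ∈ I, ∀ ω : Ω, ∀ g : ℝ → ℝ, Continuous g → Periodic g 1 →
      Continuous (L ε ω g) ∧ Periodic (L ε ω g) 1)
    -- the families h_{ω,ε} ⊆ C⁰(𝕋)
    (h : ℝ → Ω → ℝ → ℝ)
    (hhC0 : ∀ ε ∈ I, ∀ ω : Ω, Continuous (h ε ω) ∧ Periodic (h ε ω) 1)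
    (β p₁ : ℝ) (hβ : 1 < β) (hp₁ : 1 ≤ p₁)
    (C1 : Ω → ℝ) (hC1 : MemLpRV ℙ p₁ C1)
    (hmain : ∀ᵐ ω ∂ℙ, ∀ ε ∈ I, ∀ n : ℕ, 1 ≤ n →
      ∀ g : ℝ → ℝ, ContDiff ℝ 1 g → Periodic g 1 →
        crNorm 0 (fun x =>
            iterLin σ (L ε) n ω g x - (∫ t in Set.Ioc (0 : ℝ) 1, g t) * h ε (σ^[n] ω) x) ≤
          C1 ω * (n : ℝ) ^ (-β) * crNorm 1 g)
    (E : Ω → ℝ)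
    (hEbd : ∀ᵐ ω ∂ℙ, ∀ ε ∈ I, crNorm 0 (L ε ω (fun _ => 1)) ≤ E ω) :
    ∃ B₀ : Ω → ℝ, MemLpRV ℙ p₁ B₀ ∧
      ∀ᵐ ω ∂ℙ,
        (∀ n : ℕ, 1 ≤ n → ∀ ε ∈ I,
          crNorm 0 (iterLin σ (L ε) n (σinv^[n] ω) (fun _ => 1)) ≤ B₀ ω + E (σinv ω)) ∧
        (∀ ε ∈ I, crNorm 0 (h ε ω) ≤ B₀ ω + E (σinv ω)) := by
  have hσinv' : MeasurePreserving σinv ℙ ℙ := hσ.of_leftInverse hσinv hinv₁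
  have hws : Summable fun n : ℕ => ((n : ℝ) ^ (-β)) ^ p₁ := by
    simp_rw [← Real.rpow_mul (Nat.cast_nonneg _)]
    exact Real.summable_nat_rpow.2 (by nlinarith)
  obtain ⟨B, hB, hCB⟩ := hC1.exists_ae_iterate_mul_le hσinv' (by linarith)
    (fun n => Real.rpow_nonneg n.cast_nonneg (-β)) hws
  refine ⟨fun ω => 2 * B ω, hB.const_mul zero_le_two, ?_⟩
  filter_upwards [hσinv'.ae_forall_iterate hmain, hσinv'.quasiMeasurePreserving.ae hEbd, hCB]
    with ω hmainω hEω hCBω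
  have hdev : ∀ ε ∈ I, ∀ n, 1 ≤ n →
      crNorm 0 (fun x => iterLin σ (L ε) n (σinv^[n] ω) (fun _ => 1) x - h ε ω x) ≤ B ω := by
    intro ε hε n hn
    have hn' := crNorm_zero_sub_le_of_mixing
      (mul_nonneg (hC1.2.1 _) (Real.rpow_nonneg n.cast_nonneg (-β))) (hmainω n ε hε n hn)
    rw [hinv₂.iterate n ω] at hn'
    exact hn'.trans (hCBω n)
  have hhω : ∀ ε ∈ I, crNorm 0 (h ε ω) ≤ B ω + E (σinv ω) := fun ε hε =>
    have hL := hLpres ε hε (σinv ω) (fun _ => 1) continuous_const fun _ => rfl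
    crNorm_zero_le_add_of_sub_le (hhC0 ε hε ω).1 (hhC0 ε hε ω).2 hL.1 hL.2
      ((crNorm_zero_sub_comm _ _).trans_le (hdev ε hε 1 le_rfl)) (hEω ε hε)
  refine ⟨fun n hn ε hε => ?_, fun ε hε => (hhω ε hε).trans (by linarith [hB.2.1 ω])⟩
  have hA := iterLin_continuous_periodic σ (L ε) (hLpres ε hε) n (σinv^[n] ω)
    (g := fun _ => 1) continuous_const fun _ => rfl
  have := crNorm_zero_le_add_of_sub_le hA.1 hA.2 (hhC0 ε hε ω).1 (hhC0 ε hε ω).2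
    (hdev ε hε n hn) (hhω ε hε)
  linarith

theorem stmt_12
    {Ω : Type*} [MeasurableSpace Ω] (ℙ : Measure Ω) [IsProbabilityMeasure ℙ]
    (σ σinv : Ω → Ω)
    (hσ : MeasurePreserving σ ℙ ℙ) (hσinv : Measurable σinv)
    (hinv₁ : Function.LeftInverse σinv σ) (hinv₂ : Function.RightInverse σinv σ)
    (I : Set ℝ) (hIopen : IsOpen I) (hIsub : I ⊆ Set.Ioo (-1) 1) (hI0 : (0 : ℝ) ∈ I)
    -- the operators L_{ω,ε}, bounded (linear) on C⁰(𝕋)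
    (L : ℝ → Ω → (ℝ → ℝ) →ₗ[ℝ] (ℝ → ℝ))
    (hLpres : ∀ ε ∈ I, ∀ ω : Ω, ∀ g : ℝ → ℝ, Continuous g → Periodic g 1 →
      Continuous (L ε ω g) ∧ Periodic (L ε ω g) 1)
    (hLbdd : ∀ ε ∈ I, ∀ ω : Ω, ∃ Kb : ℝ, ∀ g : ℝ → ℝ, Continuous g → Periodic g 1 →
      crNorm 0 (L ε ω g) ≤ Kb * crNorm 0 g)
    -- the families h_{ω,ε} ⊆ C⁰(𝕋)
    (h : ℝ → Ω → ℝ → ℝ)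
    (hhC0 : ∀ ε ∈ I, ∀ ω : Ω, Continuous (h ε ω) ∧ Periodic (h ε ω) 1)
    (β p₁ : ℝ) (hβ : 1 < β) (hp₁ : 1 ≤ p₁)
    (C1 : Ω → ℝ) (hC1 : MemLpRV ℙ p₁ C1)
    (hmain : ∀ᵐ ω ∂ℙ, ∀ ε ∈ I, ∀ n : ℕ, 1 ≤ n →
      ∀ g : ℝ → ℝ, ContDiff ℝ 1 g → Periodic g 1 →
        crNorm 0 (fun x =>
            iterLin σ (L ε) n ω g x - (∫ t in Set.Ioc (0 : ℝ) 1, g t) * h ε (σ^[n] ω) x) ≤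
          C1 ω * (n : ℝ) ^ (-β) * crNorm 1 g)
    (E : Ω → ℝ)
    (hEbd : ∀ᵐ ω ∂ℙ, ∀ ε ∈ I, crNorm 0 (L ε ω (fun _ => 1)) ≤ E ω) :
    ∃ B₀ : Ω → ℝ, MemLpRV ℙ p₁ B₀ ∧
      ∀ᵐ ω ∂ℙ,
        (∀ n : ℕ, 1 ≤ n → ∀ ε ∈ I,
          crNorm 0 (iterLin σ (L ε) n (σinv^[n] ω) (fun _ => 1)) ≤ B₀ ω + E (σinv ω)) ∧
        (∀ ε ∈ I, crNorm 0 (h ε ω) ≤ B₀ ω + E (σinv ω)) :=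
  stmt_12_general ℙ σ σinv hσ hσinv hinv₁ hinv₂ I L hLpres h hhC0 β p₁ hβ hp₁ C1 hC1 hmain E hEbd
end
end
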